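/- arXiv:1110.6525 — 3 statements merged into one kernel-verified Lean document; each statement's English description precedes it below -/
import Mathlib

section
/- Let U ⊆ ℂ² ⊗ ℂ³ be a 2-dimensional complex linear subspace containing at least one nonzero element that is not decomposable. Then U has at most two decomposable directions, i.e. the set of 1-dimensional subspaces of U spanned by decomposable elements has at most two members. -/
/-!
The 2×2 minor on columns `i, j` is a quadratic form on `ℂ² ⊗ ℂ³` vanishing on decomposable
elements, and a nonzero matrix all of whose 2×2 minors vanish is decomposable. If `A ∈ U` is not
decomposable, some minor `q` has `q A ≠ 0`. Writing `U = span {A, B}`, the restriction of `q` to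
`U` is `q (s A + t B) = a s² + b s t + c t²` with `a = q A ≠ 0`, so every decomposable element of `U`
has `t ≠ 0` and `s / t` among the at most two roots of `a u² + b u + c`; hence it spans the line
of `r A + B` for one of those two roots `r`.
-/

open Matrix

/-- A nonzero element of `ℂ² ⊗ ℂ³`, viewed as a 2×3 complex matrix, is decomposable if it
is an outer product `h ⊗ x` with `h ≠ 0` and `x ≠ 0` (equivalently, it has rank 1). -/
def Decomposable (A : Matrix (Fin 2) (Fin 3) ℂ) : Prop :=
  ∃ (h : Fin 2 → ℂ) (x : Fin 3 → ℂ), h ≠ 0 ∧ x ≠ 0 ∧ A = vecMulVec h x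

/-- The decomposable directions of a subspace `U ⊆ ℂ² ⊗ ℂ³`: the 1-dimensional subspaces
of `U` spanned by decomposable elements. -/
def decDirections (U : Submodule ℂ (Matrix (Fin 2) (Fin 3) ℂ)) :
    Set (Submodule ℂ (Matrix (Fin 2) (Fin 3) ℂ)) :=
  {D | ∃ A : Matrix (Fin 2) (Fin 3) ℂ,
    A ∈ U ∧ A ≠ 0 ∧ Decomposable A ∧ D = Submodule.span ℂ {A}}

theorem Submodule.exists_eq_span_pair_of_finrank_eq_two {K V : Type*} [DivisionRing K]
    [AddCommGroup V] [Module K V] {U : Submodule K V} (hU : Module.finrank K U = 2) {A : V}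
    (hAU : A ∈ U) (hA : A ≠ 0) : ∃ B, U = span K {A, B} := by
  have : FiniteDimensional K U := Module.finite_of_finrank_eq_succ hU
  have hA_lt : K ∙ A < U := by
    refine lt_of_le_of_ne (span_singleton_le_iff_mem _ _ |>.2 hAU) fun h ↦ ?_
    have := finrank_span_singleton (K := K) hA
    rw [h, hU] at this
    omega
  obtain ⟨B, hBU, hBA⟩ := SetLike.exists_of_lt hA_lt
  refine ⟨B, (eq_of_le_of_finrank_le ?_ ?_).symm⟩
  · simpa [span_le, Set.insert_subset_iff] using ⟨hAU, hBU⟩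
  · have hA_lt' : K ∙ A < span K {A, B} :=
      SetLike.lt_iff_le_and_exists.2
        ⟨span_mono (by simp), B, subset_span (by simp), hBA⟩
    have := FiniteDimensional.span_of_finite K (Set.toFinite {A, B})
    have := finrank_lt_finrank_of_lt hA_lt'
    rw [finrank_span_singleton hA] at this
    omega

theorem exists_eq_or_eq_of_quadratic_eq_zero {K : Type*} [Field K] {a b c : K} (ha : a ≠ 0) :
    ∃ r₁ r₂ : K, ∀ u, a * u ^ 2 + b * u + c = 0 → u = r₁ ∨ u = r₂ := by
  by_cases h : ∃ r, a * r ^ 2 + b * r + c = 0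
  · obtain ⟨r, hr⟩ := h
    refine ⟨r, -b / a - r, fun u hu ↦ ?_⟩
    have : (u - r) * (a * (u + r) + b) = 0 := by linear_combination hu - hr
    rcases mul_eq_zero.1 this with h | h
    · exact .inl (sub_eq_zero.1 h)
    · right; field_simp; linear_combination h
  · simp only [not_exists] at h
    exact ⟨0, 0, fun u hu ↦ absurd hu (h u)⟩

def twoMinor {R n : Type*} [CommRing R] (A : Matrix (Fin 2) n R) (i j : n) : R :=
  A 0 i * A 1 j - A 0 j * A 1 i

theorem twoMinor_vecMulVec {R n : Type*} [CommRing R] (h : Fin 2 → R) (x : n → R) (i j : n) :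
    twoMinor (vecMulVec h x) i j = 0 := by
  simp only [twoMinor, vecMulVec_apply]
  ring

theorem twoMinor_smul_add_smul {R n : Type*} [CommRing R] (A B : Matrix (Fin 2) n R)
    (s t : R) (i j : n) :
    twoMinor (s • A + t • B) i j = s ^ 2 * twoMinor A i j
      + s * t * (A 0 i * B 1 j + B 0 i * A 1 j - A 0 j * B 1 i - B 0 j * A 1 i)
      + t ^ 2 * twoMinor B i j := by
  simp only [twoMinor, Matrix.add_apply, Matrix.smul_apply, smul_eq_mul]
  ring

theorem Decomposable.twoMinor_eq_zero {A : Matrix (Fin 2) (Fin 3) ℂ} (hA : Decomposable A)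
    (i j : Fin 3) : twoMinor A i j = 0 := by
  obtain ⟨h, x, -, -, rfl⟩ := hA
  exact twoMinor_vecMulVec h x i j

theorem decomposable_of_twoMinor_eq_zero {A : Matrix (Fin 2) (Fin 3) ℂ} (hA : A ≠ 0)
    (h : ∀ i j, twoMinor A i j = 0) : Decomposable A := by
  obtain ⟨r, k, hrk⟩ : ∃ r k, A r k ≠ 0 := by
    by_contra! h0
    exact hA (Matrix.ext h0)
  -- every row is a multiple of the row `r`, since all 2×2 minors vanish
  refine ⟨fun i ↦ A i k / A r k, A r, fun h1 ↦ ?_, fun h1 ↦ hrk (congrFun h1 k), ?_⟩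
  · simpa [hrk] using congrFun h1 r
  · ext i l
    have := h k l
    simp only [twoMinor] at this
    rw [vecMulVec_apply, div_mul_eq_mul_div, eq_div_iff hrk]
    fin_cases r <;> fin_cases i <;> simp only [Fin.zero_eta, Fin.mk_one, Fin.isValue]
    · ring
    · linear_combination this
    · linear_combination -this
    · ring

theorem exists_eq_or_eq_of_decomposable_smul_add_smul {A B : Matrix (Fin 2) (Fin 3) ℂ}
    {i j : Fin 3} (hA : twoMinor A i j ≠ 0) :
    ∃ r₁ r₂ : ℂ, ∀ s t : ℂ, s • A + t • B ≠ 0 → Decomposable (s • A + t • B) →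
      t ≠ 0 ∧ (s / t = r₁ ∨ s / t = r₂) := by
  obtain ⟨r₁, r₂, hr⟩ := exists_eq_or_eq_of_quadratic_eq_zero
    (b := A 0 i * B 1 j + B 0 i * A 1 j - A 0 j * B 1 i - B 0 j * A 1 i)
    (c := twoMinor B i j) hA
  refine ⟨r₁, r₂, fun s t hne hdec ↦ ?_⟩
  have hq := hdec.twoMinor_eq_zero i j
  rw [twoMinor_smul_add_smul] at hq
  have ht : t ≠ 0 := by
    rintro rfl
    have hs : s = 0 := by simpa [hA] using hq
    simp [hs] at hne
  refine ⟨ht, hr _ ?_⟩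
  field_simp
  linear_combination hq

/-- Let `U ⊆ ℂ² ⊗ ℂ³` be a 2-dimensional subspace containing at least one nonzero element
that is not decomposable. Then `U` has at most two decomposable directions. -/
theorem stmt_6 (U : Submodule ℂ (Matrix (Fin 2) (Fin 3) ℂ))
    (hU : Module.finrank ℂ U = 2)
    (hA : ∃ A ∈ U, A ≠ 0 ∧ ¬ Decomposable A) :
    ∃ D₁ D₂ : Submodule ℂ (Matrix (Fin 2) (Fin 3) ℂ),
      decDirections U ⊆ {D₁, D₂} := by
  obtain ⟨A, hAU, hA0, hAdec⟩ := hA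
  obtain ⟨i, j, hij⟩ : ∃ i j, twoMinor A i j ≠ 0 := by
    by_contra! h
    exact hAdec (decomposable_of_twoMinor_eq_zero hA0 h)
  obtain ⟨B, rfl⟩ := U.exists_eq_span_pair_of_finrank_eq_two hU hAU hA0
  obtain ⟨r₁, r₂, hr⟩ := exists_eq_or_eq_of_decomposable_smul_add_smul (B := B) hij
  refine ⟨ℂ ∙ (r₁ • A + B), ℂ ∙ (r₂ • A + B), ?_⟩
  rintro _ ⟨_, hA'U, hA'0, hA'dec, rfl⟩
  obtain ⟨s, t, rfl⟩ := Submodule.mem_span_pair.1 hA'U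
  obtain ⟨ht, hst⟩ := hr s t hA'0 hA'dec
  have hscale : s • A + t • B = t • ((s / t) • A + B) := by
    rw [smul_add, smul_smul, mul_div_cancel₀ _ ht]
  rw [hscale, Submodule.span_singleton_smul_eq (IsUnit.mk0 t ht)]
  rcases hst with h | h <;> simp [h]
end

section
/- Let U ⊆ ℂ² ⊗ ℂ³ be a 2-dimensional complex linear subspace. Then U has exactly two decomposable directions if and only if there exist a basis (h₁, h₂) of ℂ² and linearly independent vectors x, x′ ∈ ℂ³ such that U is spanned by h₁ ⊗ x and h₂ ⊗ x′. -/
open Matrix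

/-!
A decomposable element `h ⊗ y = a • h₁ ⊗ x + b • h₂ ⊗ x'` is a multiple of one of the two
generators: multiplying by a row vector orthogonal to `h₂` but not to `h₁` puts `a • x` on the
line through `y`, and symmetrically `b • x'`, so the independence of `x, x'` forces `a = 0` or
`b = 0`.
Hence `span {h₁ ⊗ x, h₂ ⊗ x'}` has exactly the two decomposable directions of its generators.
Conversely, two distinct decomposable directions `g₁ ⊗ y₁`, `g₂ ⊗ y₂` of `U` span it; if `g₁, g₂`
(or `y₁, y₂`) were dependent, `g₁ ⊗ y₁ + g₂ ⊗ y₂` would be decomposable, a third direction.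
-/

section Pairs

variable {K V : Type*} [Field K] [AddCommGroup V] [Module K V]

theorem linearIndependent_pair_iff_span_singleton_ne {A B : V} (hA : A ≠ 0) (hB : B ≠ 0) :
    LinearIndependent K ![A, B] ↔ K ∙ A ≠ K ∙ B := by
  rw [LinearIndependent.pair_iff' hA, Ne, Submodule.span_singleton_eq_span_singleton]
  constructor
  · rintro h ⟨z, hz⟩
    exact h z hz
  · rintro h a rfl
    exact h ⟨Units.mk0 a (left_ne_zero_of_smul hB), rfl⟩

theorem LinearIndependent.pair_add_ne_zero {A B : V} (hAB : LinearIndependent K ![A, B]) :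
    A + B ≠ 0 := fun h ↦
  one_ne_zero (LinearIndependent.pair_iff.mp hAB 1 1 (by rw [one_smul, one_smul, h])).1

theorem LinearIndependent.span_singleton_add_ne_left {A B : V}
    (hAB : LinearIndependent K ![A, B]) : K ∙ (A + B) ≠ K ∙ A := by
  intro h
  obtain ⟨c, hc⟩ := Submodule.mem_span_singleton.mp (h ▸ Submodule.mem_span_singleton_self (A + B))
  refine (LinearIndependent.pair_iff' (by simpa using hAB.ne_zero 0)).mp hAB (c - 1) ?_
  rw [sub_smul, hc, one_smul]
  abel

theorem LinearIndependent.span_singleton_add_ne_right {A B : V}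
    (hAB : LinearIndependent K ![A, B]) : K ∙ (A + B) ≠ K ∙ B := by
  rw [add_comm]
  exact (LinearIndependent.pair_symm_iff.mp hAB).span_singleton_add_ne_left

theorem Submodule.eq_span_pair_of_finrank_eq_two {U : Submodule K V} (hU : Module.finrank K U = 2)
    {A B : V} (hA : A ∈ U) (hB : B ∈ U) (hAB : LinearIndependent K ![A, B]) :
    U = span K {A, B} := by
  have : FiniteDimensional K U := Module.finite_of_finrank_pos (by omega)
  refine (eq_of_le_of_finrank_eq (span_le.mpr (Set.insert_subset hA (by simpa))) ?_).symm
  rw [hU, ← Matrix.range_cons_cons_empty A B ![], finrank_span_eq_card hAB, Fintype.card_fin]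

theorem LinearIndependent.not_pair_mem_span_singleton {x x' : V}
    (hx : LinearIndependent K ![x, x']) (y : V) : ¬ (x ∈ K ∙ y ∧ x' ∈ K ∙ y) := by
  rintro ⟨hxy, hx'y⟩
  have hle : Submodule.span K (Set.range ![x, x']) ≤ K ∙ y := by
    rw [Submodule.span_le, Set.range_subset_iff]
    exact Fin.forall_fin_two.mpr ⟨hxy, hx'y⟩
  have h2 := Submodule.finrank_mono hle
  rw [finrank_span_eq_card hx, Fintype.card_fin] at h2
  have h1 := finrank_span_le_card (R := K) ({y} : Set V)
  simp only [Set.toFinset_singleton, Finset.card_singleton] at h1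
  omega

end Pairs

theorem vecMulVec_eq_zero_iff {R m n : Type*} [MulZeroClass R] [NoZeroDivisors R] {h : m → R}
    {x : n → R} : vecMulVec h x = 0 ↔ h = 0 ∨ x = 0 := by
  simp only [← ext_iff, vecMulVec_apply, Matrix.zero_apply, mul_eq_zero, funext_iff,
    Pi.zero_apply, forall_or_left, forall_or_right]

section VecMulVec

variable {K m n : Type*} [Field K]

theorem exists_vecMulVec_add_vecMulVec_eq_of_not_linearIndependent_left {g₁ g₂ : m → K}
    (hg : ¬ LinearIndependent K ![g₁, g₂]) (hg₂ : g₂ ≠ 0) (y₁ y₂ : n → K) :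
    ∃ y, vecMulVec g₁ y₁ + vecMulVec g₂ y₂ = vecMulVec g₂ y := by
  obtain ⟨a, rfl⟩ : ∃ a : K, a • g₂ = g₁ := by simpa [linearIndependent_fin2, hg₂] using hg
  exact ⟨a • y₁ + y₂, by rw [smul_vecMulVec, vecMulVec_add, vecMulVec_smul]⟩

theorem exists_vecMulVec_add_vecMulVec_eq_of_not_linearIndependent_right {y₁ y₂ : n → K}
    (hy : ¬ LinearIndependent K ![y₁, y₂]) (hy₂ : y₂ ≠ 0) (g₁ g₂ : m → K) :
    ∃ g, vecMulVec g₁ y₁ + vecMulVec g₂ y₂ = vecMulVec g y₂ := by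
  obtain ⟨a, rfl⟩ : ∃ a : K, a • y₂ = y₁ := by simpa [linearIndependent_fin2, hy₂] using hy
  exact ⟨a • g₁ + g₂, by rw [vecMulVec_smul, add_vecMulVec, smul_vecMulVec]⟩

variable [Fintype m]

theorem exists_dotProduct_ne_zero_eq_zero [DecidableEq m] {h₁ h₂ : m → K}
    (hh : LinearIndependent K ![h₁, h₂]) :
    ∃ u : m → K, u ⬝ᵥ h₁ ≠ 0 ∧ u ⬝ᵥ h₂ = 0 := by
  have hh₂ : h₂ ≠ 0 := by simpa using hh.ne_zero 1
  have hh₁ : h₁ ∉ K ∙ h₂ := by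
    rw [LinearIndependent.pair_symm_iff, LinearIndependent.pair_iff' hh₂] at hh
    simpa [Submodule.mem_span_singleton] using hh
  obtain ⟨f, hf₁, hf₂⟩ := Submodule.exists_dual_map_eq_bot_of_notMem hh₁ inferInstance
  obtain ⟨u, rfl⟩ := (dotProductEquiv K m).surjective f
  exact ⟨u, by simpa using hf₁, by simpa [Submodule.map_span] using hf₂⟩

theorem vecMul_smul_vecMulVec_add_smul_vecMulVec (u h₁ h₂ : m → K) (x x' : n → K) (a b : K) :
    u ᵥ* (a • vecMulVec h₁ x + b • vecMulVec h₂ x') =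
      (a * (u ⬝ᵥ h₁)) • x + (b * (u ⬝ᵥ h₂)) • x' := by
  rw [vecMul_add, vecMul_smul, vecMul_smul, vecMul_vecMulVec, vecMul_vecMulVec, smul_smul,
    smul_smul]

theorem mem_span_singleton_of_smul_vecMulVec_add_smul_vecMulVec_eq {h₁ h₂ h : m → K}
    {x x' y : n → K} (hh : LinearIndependent K ![h₁, h₂]) {a b : K}
    (hM : a • vecMulVec h₁ x + b • vecMulVec h₂ x' = vecMulVec h y) (ha : a ≠ 0) :
    x ∈ K ∙ y := by
  classical
  obtain ⟨u, hu₁, hu₂⟩ := exists_dotProduct_ne_zero_eq_zero hh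
  have hux : (a * (u ⬝ᵥ h₁)) • x = (u ⬝ᵥ h) • y := by
    have := congrArg (vecMul u) hM
    rwa [vecMul_smul_vecMulVec_add_smul_vecMulVec, vecMul_vecMulVec, hu₂, mul_zero, zero_smul,
      add_zero] at this
  rw [← Submodule.smul_mem_iff _ (mul_ne_zero ha hu₁), hux]
  exact Submodule.smul_mem _ _ (Submodule.mem_span_singleton_self y)

theorem eq_zero_or_eq_zero_of_smul_vecMulVec_add_smul_vecMulVec_eq {h₁ h₂ h : m → K}
    {x x' y : n → K} (hh : LinearIndependent K ![h₁, h₂]) (hx : LinearIndependent K ![x, x'])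
    {a b : K} (hM : a • vecMulVec h₁ x + b • vecMulVec h₂ x' = vecMulVec h y) :
    a = 0 ∨ b = 0 := by
  have hh' : LinearIndependent K ![h₂, h₁] := LinearIndependent.pair_symm_iff.mp hh
  have hM' : b • vecMulVec h₂ x' + a • vecMulVec h₁ x = vecMulVec h y := by rw [add_comm, hM]
  by_contra! hab
  exact hx.not_pair_mem_span_singleton y
    ⟨mem_span_singleton_of_smul_vecMulVec_add_smul_vecMulVec_eq hh hM hab.1,
      mem_span_singleton_of_smul_vecMulVec_add_smul_vecMulVec_eq hh' hM' hab.2⟩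

theorem linearIndependent_vecMulVec_pair {h₁ h₂ : m → K} {x x' : n → K}
    (hh : LinearIndependent K ![h₁, h₂]) (hx : LinearIndependent K ![x, x']) :
    LinearIndependent K ![vecMulVec h₁ x, vecMulVec h₂ x'] := by
  have hh₁ : h₁ ≠ 0 := by simpa using hh.ne_zero 0
  have hh₂ : h₂ ≠ 0 := by simpa using hh.ne_zero 1
  have hx₁ : x ≠ 0 := by simpa using hx.ne_zero 0
  have hx₂ : x' ≠ 0 := by simpa using hx.ne_zero 1
  refine LinearIndependent.pair_iff.mpr fun s t hst => ?_
  rcases eq_zero_or_eq_zero_of_smul_vecMulVec_add_smul_vecMulVec_eq (h := 0) (y := x) hh hx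
    (by rw [hst, zero_vecMulVec]) with rfl | rfl
  · simp_all [vecMulVec_eq_zero_iff]
  · simp_all [vecMulVec_eq_zero_iff]

end VecMulVec

theorem decomposable_vecMulVec {h : Fin 2 → ℂ} {x : Fin 3 → ℂ} (hA : vecMulVec h x ≠ 0) :
    Decomposable (vecMulVec h x) := by
  rw [Ne, vecMulVec_eq_zero_iff, not_or] at hA
  exact ⟨h, x, hA.1, hA.2, rfl⟩

theorem span_singleton_mem_decDirections {U : Submodule ℂ (Matrix (Fin 2) (Fin 3) ℂ)}
    {h : Fin 2 → ℂ} {x : Fin 3 → ℂ} (hU : vecMulVec h x ∈ U) (hA : vecMulVec h x ≠ 0) :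
    ℂ ∙ vecMulVec h x ∈ decDirections U :=
  ⟨_, hU, hA, decomposable_vecMulVec hA, rfl⟩

theorem decDirections_span_pair {h₁ h₂ : Fin 2 → ℂ} {x x' : Fin 3 → ℂ}
    (hh : LinearIndependent ℂ ![h₁, h₂]) (hx : LinearIndependent ℂ ![x, x']) :
    decDirections (Submodule.span ℂ {vecMulVec h₁ x, vecMulVec h₂ x'}) =
      {ℂ ∙ vecMulVec h₁ x, ℂ ∙ vecMulVec h₂ x'} := by
  have hA := linearIndependent_vecMulVec_pair hh hx
  ext D
  constructor
  · rintro ⟨A, hAU, hA0, ⟨h, y, -, -, rfl⟩, rfl⟩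
    obtain ⟨a, b, hab⟩ := Submodule.mem_span_pair.mp hAU
    rcases eq_zero_or_eq_zero_of_smul_vecMulVec_add_smul_vecMulVec_eq hh hx hab with rfl | rfl
    · rw [zero_smul, zero_add] at hab
      rw [← hab] at hA0 ⊢
      exact Or.inr (Submodule.span_singleton_smul_eq (left_ne_zero_of_smul hA0).isUnit _)
    · rw [zero_smul, add_zero] at hab
      rw [← hab] at hA0 ⊢
      exact Or.inl (Submodule.span_singleton_smul_eq (left_ne_zero_of_smul hA0).isUnit _)
  · rintro (rfl | rfl)
    · exact span_singleton_mem_decDirections (Submodule.subset_span (by simp))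
        (by simpa using hA.ne_zero 0)
    · exact span_singleton_mem_decDirections (Submodule.subset_span (by simp))
        (by simpa using hA.ne_zero 1)

theorem linearIndependent_of_decDirections_eq_pair {U : Submodule ℂ (Matrix (Fin 2) (Fin 3) ℂ)}
    {g₁ g₂ : Fin 2 → ℂ} {y₁ y₂ : Fin 3 → ℂ}
    (hA : LinearIndependent ℂ ![vecMulVec g₁ y₁, vecMulVec g₂ y₂])
    (h₁U : vecMulVec g₁ y₁ ∈ U) (h₂U : vecMulVec g₂ y₂ ∈ U)
    (hdirs : decDirections U = {ℂ ∙ vecMulVec g₁ y₁, ℂ ∙ vecMulVec g₂ y₂}) :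
    LinearIndependent ℂ ![g₁, g₂] ∧ LinearIndependent ℂ ![y₁, y₂] := by
  have hsum : ∀ g y, vecMulVec g₁ y₁ + vecMulVec g₂ y₂ ≠ vecMulVec g y := by
    intro g y h
    have hmem := span_singleton_mem_decDirections (h ▸ add_mem h₁U h₂U) (h ▸ hA.pair_add_ne_zero)
    rw [← h, hdirs] at hmem
    rcases hmem with h | h
    exacts [hA.span_singleton_add_ne_left h, hA.span_singleton_add_ne_right h]
  have hA₂ : g₂ ≠ 0 ∧ y₂ ≠ 0 := by simpa [vecMulVec_eq_zero_iff, not_or] using hA.ne_zero 1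
  constructor
  · by_contra hg
    obtain ⟨y, hy⟩ :=
      exists_vecMulVec_add_vecMulVec_eq_of_not_linearIndependent_left hg hA₂.1 y₁ y₂
    exact hsum _ _ hy
  · by_contra hy
    obtain ⟨g, hg⟩ :=
      exists_vecMulVec_add_vecMulVec_eq_of_not_linearIndependent_right hy hA₂.2 g₁ g₂
    exact hsum _ _ hg

/-- A 2-dimensional subspace `U ⊆ ℂ² ⊗ ℂ³` has exactly two decomposable directions if and only
if there are a basis `(h₁, h₂)` of `ℂ²` and linearly independent `x, x' ∈ ℂ³` such that
`U = span {h₁ ⊗ x, h₂ ⊗ x'}`. -/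
theorem stmt_7 (U : Submodule ℂ (Matrix (Fin 2) (Fin 3) ℂ))
    (hU : Module.finrank ℂ U = 2) :
    (∃ D₁ D₂ : Submodule ℂ (Matrix (Fin 2) (Fin 3) ℂ),
      D₁ ≠ D₂ ∧ decDirections U = {D₁, D₂}) ↔
    (∃ (h₁ h₂ : Fin 2 → ℂ) (x x' : Fin 3 → ℂ),
      LinearIndependent ℂ ![h₁, h₂] ∧ LinearIndependent ℂ ![x, x'] ∧
      U = Submodule.span ℂ {vecMulVec h₁ x, vecMulVec h₂ x'}) := by
  constructor
  · rintro ⟨D₁, D₂, hne, hdirs⟩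
    obtain ⟨A₁, hA₁U, hA₁0, ⟨g₁, y₁, -, -, rfl⟩, rfl⟩ : D₁ ∈ decDirections U :=
      hdirs ▸ Set.mem_insert _ _
    obtain ⟨A₂, hA₂U, hA₂0, ⟨g₂, y₂, -, -, rfl⟩, rfl⟩ : D₂ ∈ decDirections U :=
      hdirs ▸ Set.mem_insert_of_mem _ rfl
    have hA := (linearIndependent_pair_iff_span_singleton_ne hA₁0 hA₂0).mpr hne
    obtain ⟨hg, hy⟩ := linearIndependent_of_decDirections_eq_pair hA hA₁U hA₂U hdirs
    exact ⟨g₁, g₂, y₁, y₂, hg, hy, U.eq_span_pair_of_finrank_eq_two hU hA₁U hA₂U hA⟩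
  · rintro ⟨h₁, h₂, x, x', hh, hx, rfl⟩
    have hA := linearIndependent_vecMulVec_pair hh hx
    refine ⟨_, _, ?_, decDirections_span_pair hh hx⟩
    exact (linearIndependent_pair_iff_span_singleton_ne (by simpa using hA.ne_zero 0)
      (by simpa using hA.ne_zero 1)).mp hA
end

section
/- Let A = (a_{ij}) be a 2×2 matrix whose entries a_{ij} are vectors in ℂ³, and let q_A ∈ ℂ[y₀, y₁, y₂] be the quadratic form q_A(y) = ⟨a₁₁, y⟩⟨a₂₂, y⟩ − ⟨a₁₂, y⟩⟨a₂₁, y⟩, where ⟨v, y⟩ = v₀y₀ + v₁y₁ + v₂y₂. Assume q_A ≠ 0 and q_A factors as a product of two linear forms. Then there exist invertible matrices P, Q ∈ GL₂(ℂ) such that the transformed matrix PAQ, defined by (PAQ)_{ij} = Σ_{k,l} P_{ik} a_{kl} Q_{lj} ∈ ℂ³, has vanishing (1,2)-entry; that is, A is GL₂(ℂ) × GL₂(ℂ)-equivalent to a matrix of the form (x 0; z y). -/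
/-!
On the plane `u ⬝ᵥ y = 0` the determinant of `A(y) = (a_kl ⬝ᵥ y)` vanishes, so the values of `A`
there form a linear space `S` of singular `2 × 2` matrices. Such a space has a common kernel or
cokernel vector: for a nonzero `M = x wᵀ ∈ S`, polarizing `det` at `M` gives `p ⬝ᵥ N *ᵥ q = 0` on
`S` for the rotated vectors `p = x⊥`, `q = w⊥`; for singular `N` this forces `N *ᵥ q = 0` or
`p ᵥ* N = 0`, and `S` is not the union of two proper subspaces. In the kernel case both forms
`∑ l, q l • a_kl` vanish on `u ⬝ᵥ y = 0`, so they are multiples of `u` and some nontrivial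
combination `∑ k, p k • (∑ l, q l • a_kl)` is zero. Completing `p` and `q` to invertible matrices
gives `P` and `Q`.
-/

open Matrix

section

variable {K : Type*} [Field K]

theorem vecMulVec_mulVec_vecMul (N : Matrix (Fin 2) (Fin 2) K) (p q : Fin 2 → K) :
    vecMulVec (N *ᵥ q) (p ᵥ* N) =
      (p ⬝ᵥ N *ᵥ q) • N - N.det • vecMulVec ![p 1, -p 0] ![q 1, -q 0] := by
  ext i j
  fin_cases i <;> fin_cases j <;>
    simp [det_fin_two, vecMulVec_apply, dotProduct, mulVec, vecMul, Fin.sum_univ_two] <;> ring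

theorem exists_eq_vecMulVec_of_det_eq_zero {M : Matrix (Fin 2) (Fin 2) K} (hM : M.det = 0) :
    ∃ x w : Fin 2 → K, M = vecMulVec x w := by
  by_cases h0 : M = 0
  · exact ⟨0, 0, by simp [h0]⟩
  obtain ⟨i, j, hij⟩ : ∃ i j, M i j ≠ 0 := by
    by_contra! h
    exact h0 (Matrix.ext h)
  refine ⟨(M i j)⁻¹ • M.col j, M.row i, ?_⟩
  have hrank := vecMulVec_mulVec_vecMul M (Pi.single i 1) (Pi.single j 1)
  rw [hM, zero_smul, sub_zero, mulVec_single_one, single_one_vecMul, single_dotProduct,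
    one_mul, col_apply] at hrank
  rw [smul_vecMulVec, hrank, inv_smul_smul₀ hij]

theorem mulVec_eq_zero_or_vecMul_eq_zero {N : Matrix (Fin 2) (Fin 2) K} {p q : Fin 2 → K}
    (hN : N.det = 0) (h : p ⬝ᵥ N *ᵥ q = 0) : N *ᵥ q = 0 ∨ p ᵥ* N = 0 := by
  have hrank := vecMulVec_mulVec_vecMul N p q
  rwa [hN, h, zero_smul, zero_smul, sub_zero, vecMulVec_eq_zero] at hrank

theorem det_vecMulVec_add (x w : Fin 2 → K) (N : Matrix (Fin 2) (Fin 2) K) :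
    (vecMulVec x w + N).det = N.det + ![x 1, -x 0] ⬝ᵥ N *ᵥ ![w 1, -w 0] := by
  simp [det_fin_two, vecMulVec_apply, dotProduct, mulVec, Fin.sum_univ_two]
  ring

theorem rotate_ne_zero {x : Fin 2 → K} (hx : x ≠ 0) : ![x 1, -x 0] ≠ 0 := by
  contrapose! hx
  ext i
  fin_cases i
  · simpa using congrFun hx 1
  · simpa using congrFun hx 0

theorem exists_mulVec_eq_zero_or_exists_vecMul_eq_zero
    (S : Submodule K (Matrix (Fin 2) (Fin 2) K)) (hS : ∀ N ∈ S, N.det = 0) :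
    (∃ q ≠ 0, ∀ N ∈ S, N *ᵥ q = 0) ∨ (∃ p ≠ 0, ∀ N ∈ S, p ᵥ* N = 0) := by
  rcases eq_or_ne S ⊥ with rfl | hS_ne
  · exact .inl ⟨![1, 0], by simp, fun N hN => by simp [(Submodule.mem_bot K).1 hN]⟩
  obtain ⟨M, hMS, hM0⟩ := Submodule.exists_mem_ne_zero_of_ne_bot hS_ne
  obtain ⟨x, w, rfl⟩ := exists_eq_vecMulVec_of_det_eq_zero (hS _ hMS)
  obtain ⟨hx, hw⟩ : x ≠ 0 ∧ w ≠ 0 := by simpa [not_or] using hM0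
  let p := ![x 1, -x 0]
  let q := ![w 1, -w 0]
  let f : Matrix (Fin 2) (Fin 2) K →ₗ[K] Fin 2 → K := (mulVecBilin K K).flip q
  let g : Matrix (Fin 2) (Fin 2) K →ₗ[K] Fin 2 → K := vecMulBilin K K p
  have hcover : (S : Set (Matrix (Fin 2) (Fin 2) K)) ⊆ ↑(LinearMap.ker f) ∪ ↑(LinearMap.ker g) := by
    intro N hN
    have hpolar := hS _ (add_mem hMS hN)
    rw [det_vecMulVec_add, hS N hN, zero_add] at hpolar
    exact mulVec_eq_zero_or_vecMul_eq_zero (hS N hN) hpolar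
  exact (AddSubgroupClass.subset_union.1 hcover).imp
    (fun h => ⟨q, rotate_ne_zero hw, h⟩) (fun h => ⟨p, rotate_ne_zero hx, h⟩)

theorem exists_ne_zero_sum_smul_eq_zero_of_mem_span_singleton {V : Type*} [AddCommGroup V]
    [Module K V] {u : V} {w : Fin 2 → V} (hw : ∀ k, w k ∈ K ∙ u) :
    ∃ p : Fin 2 → K, p ≠ 0 ∧ ∑ k, p k • w k = 0 := by
  have hdep : ¬LinearIndependent K (fun k => (⟨w k, hw k⟩ : K ∙ u)) := fun hli => by
    have := hli.fintype_card_le_finrank.trans (finrank_span_le_card {u})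
    simp at this
  obtain ⟨p, hp, i, hi⟩ := Fintype.not_linearIndependent_iff.1 hdep
  exact ⟨p, fun h => hi (by simp [h]), by simpa using congrArg Subtype.val hp⟩

theorem exists_isUnit_det_row_eq (i : Fin 2) {p : Fin 2 → K} (hp : p ≠ 0) :
    ∃ P : Matrix (Fin 2) (Fin 2) K, IsUnit P.det ∧ P i = p := by
  obtain ⟨r, hr⟩ : ∃ r : Fin 2 → K, p 0 * r 1 - p 1 * r 0 ≠ 0 := by
    by_cases h0 : p 0 = 0
    · refine ⟨![1, 0], fun h => hp ?_⟩
      have h1 : p 1 = 0 := by simpa using h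
      exact funext fun j => by fin_cases j <;> assumption
    · exact ⟨![0, 1], by simpa using h0⟩
  fin_cases i
  · exact ⟨of ![p, r], by simpa [det_fin_two] using hr, rfl⟩
  · refine ⟨of ![r, p], ?_, rfl⟩
    rw [isUnit_iff_ne_zero, det_fin_two]
    contrapose! hr
    simp only [of_apply, cons_val_zero, cons_val_one] at hr
    linear_combination -hr

variable {n : Type*} [Fintype n]

theorem mem_span_singleton_of_dotProduct_eq_zero {u w : n → K}
    (h : ∀ y, u ⬝ᵥ y = 0 → w ⬝ᵥ y = 0) : w ∈ K ∙ u := by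
  have hdual : dotProductBilin K K w ∈ K ∙ dotProductBilin K K u := by
    simpa using mem_span_of_iInf_ker_le_ker (L := fun _ : Unit => dotProductBilin K K u)
      (K := dotProductBilin K K w) (by intro y; simpa using h y)
  obtain ⟨c, hc⟩ := Submodule.mem_span_singleton.1 hdual
  classical
  refine Submodule.mem_span_singleton.2 ⟨c, funext fun i => ?_⟩
  simpa using LinearMap.congr_fun hc (Pi.single i 1)

def dotProductMap {m m' : Type*} (A : Matrix m m' (n → K)) : (n → K) →ₗ[K] Matrix m m' K where
  toFun y := A.map (· ⬝ᵥ y)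
  map_add' y z := by ext; simp [dotProduct_add]
  map_smul' c y := by ext; simp [dotProduct_smul]

theorem exists_sum_smul_eq_zero_of_mulVec_eq_zero {A : Matrix (Fin 2) (Fin 2) (n → K)}
    {u : n → K} {q : Fin 2 → K} (h : ∀ y, u ⬝ᵥ y = 0 → A.map (· ⬝ᵥ y) *ᵥ q = 0) :
    ∃ p : Fin 2 → K, p ≠ 0 ∧ ∑ k, ∑ l, (p k * q l) • A k l = 0 := by
  have hspan : ∀ k, ∑ l, q l • A k l ∈ K ∙ u := fun k =>
    mem_span_singleton_of_dotProduct_eq_zero fun y hy => by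
      simpa [mulVec, Fin.sum_univ_two, add_dotProduct, smul_dotProduct, mul_comm]
        using congrFun (h y hy) k
  obtain ⟨p, hp, hsum⟩ := exists_ne_zero_sum_smul_eq_zero_of_mem_span_singleton hspan
  refine ⟨p, hp, ?_⟩
  simpa [Finset.smul_sum, mul_smul] using hsum

theorem exists_sum_smul_eq_zero_of_det_eq_zero {A : Matrix (Fin 2) (Fin 2) (n → K)}
    {u : n → K} (h : ∀ y, u ⬝ᵥ y = 0 → (A.map (· ⬝ᵥ y)).det = 0) :
    ∃ p q : Fin 2 → K, p ≠ 0 ∧ q ≠ 0 ∧ ∑ k, ∑ l, (p k * q l) • A k l = 0 := by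
  let S := (LinearMap.ker (dotProductBilin K K u)).map (dotProductMap A)
  have hS : ∀ N ∈ S, N.det = 0 := by
    rintro _ ⟨y, hy, rfl⟩
    exact h y hy
  have hmem : ∀ y, u ⬝ᵥ y = 0 → A.map (· ⬝ᵥ y) ∈ S := fun y hy => ⟨y, hy, rfl⟩
  rcases exists_mulVec_eq_zero_or_exists_vecMul_eq_zero S hS with ⟨q, hq, hker⟩ | ⟨p, hp, hker⟩
  · obtain ⟨p, hp, hpq⟩ := exists_sum_smul_eq_zero_of_mulVec_eq_zero fun y hy => hker _ (hmem y hy)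
    exact ⟨p, q, hp, hq, hpq⟩
  · obtain ⟨q, hq, hqp⟩ := exists_sum_smul_eq_zero_of_mulVec_eq_zero (A := Aᵀ) (q := p)
      fun y hy => by rw [transpose_map, mulVec_transpose]; exact hker _ (hmem y hy)
    refine ⟨p, q, hp, hq, ?_⟩
    rw [Finset.sum_comm]
    simpa [mul_comm] using hqp

end

theorem stmt_10_general (A : Matrix (Fin 2) (Fin 2) (Fin 3 → ℂ))
    (hfact : ∃ u v : Fin 3 → ℂ, ∀ y : Fin 3 → ℂ,
        (∑ i, A 0 0 i * y i) * (∑ i, A 1 1 i * y i) -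
        (∑ i, A 0 1 i * y i) * (∑ i, A 1 0 i * y i) =
        (∑ i, u i * y i) * (∑ i, v i * y i)) :
    ∃ P Q : Matrix (Fin 2) (Fin 2) ℂ, IsUnit P.det ∧ IsUnit Q.det ∧
      ∑ k : Fin 2, ∑ l : Fin 2, (P 0 k * Q l 1) • A k l = 0 := by
  obtain ⟨u, v, huv⟩ := hfact
  have hdet : ∀ y, u ⬝ᵥ y = 0 → (A.map (· ⬝ᵥ y)).det = 0 := fun y hy => by
    have hquad := huv y
    rw [show ∑ i, u i * y i = 0 from hy, zero_mul] at hquad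
    simpa [det_fin_two, dotProduct] using hquad
  obtain ⟨p, q, hp, hq, hpq⟩ := exists_sum_smul_eq_zero_of_det_eq_zero hdet
  obtain ⟨P, hP, hP0⟩ := exists_isUnit_det_row_eq 0 hp
  obtain ⟨Q, hQ, hQ1⟩ := exists_isUnit_det_row_eq 1 hq
  refine ⟨P, Qᵀ, hP, by rwa [det_transpose], ?_⟩
  simpa [hP0, hQ1] using hpq

/-- Let `A = (a_{ij})` be a 2×2 matrix with entries in `ℂ³`, and let
`q_A(y) = ⟨a₁₁, y⟩⟨a₂₂, y⟩ − ⟨a₁₂, y⟩⟨a₂₁, y⟩` where `⟨v, y⟩ = Σ vᵢ yᵢ`. If `q_A ≠ 0` and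
`q_A` factors as a product of two linear forms, then there are invertible `P, Q ∈ GL₂(ℂ)`
such that the transformed matrix `PAQ`, with `(PAQ)_{ij} = Σ_{k,l} P_{ik} a_{kl} Q_{lj}`,
has vanishing `(1,2)`-entry; that is, `A` is equivalent to a matrix of the form
`(x 0; z y)`. -/
theorem stmt_10 (A : Matrix (Fin 2) (Fin 2) (Fin 3 → ℂ))
    (hq : (fun y : Fin 3 → ℂ =>
        (∑ i, A 0 0 i * y i) * (∑ i, A 1 1 i * y i) -
        (∑ i, A 0 1 i * y i) * (∑ i, A 1 0 i * y i)) ≠ 0)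
    (hfact : ∃ u v : Fin 3 → ℂ, ∀ y : Fin 3 → ℂ,
        (∑ i, A 0 0 i * y i) * (∑ i, A 1 1 i * y i) -
        (∑ i, A 0 1 i * y i) * (∑ i, A 1 0 i * y i) =
        (∑ i, u i * y i) * (∑ i, v i * y i)) :
    ∃ P Q : Matrix (Fin 2) (Fin 2) ℂ, IsUnit P.det ∧ IsUnit Q.det ∧
      ∑ k : Fin 2, ∑ l : Fin 2, (P 0 k * Q l 1) • A k l = 0 :=
  stmt_10_general A hfact
end
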